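/- Let 𝒜 be a finite alphabet with d ≥ 2 symbols, let π = (π₀, π₁) be an irreducible combinatorial data on 𝒜, let ε ∈ {0,1}, and let π' = r_ε(π). Then Θ_{π,ε} Ω_π = Ω_{π'} (Θ_{π,ε}ᵀ)⁻¹; equivalently, Θ_{π,ε} Ω_π Θ_{π,ε}ᵀ = Ω_{π'}. -/

import Mathlib

open Matrix

/-- The top element of `Fin d` (corresponding to the value `d` in `{1, …, d}`). -/
def finTop (d : ℕ) (hd : 0 < d) : Fin d := ⟨d - 1, by omega⟩

/-- The matrix `Ω_π` associated to the combinatorial data `π = (p0, p1)`. -/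
def rvOmega {A : Type*} [Fintype A] (d : ℕ) (p0 p1 : A ≃ Fin d) :
    Matrix A A ℝ :=
  Matrix.of fun α β =>
    if p1 β < p1 α ∧ p0 α < p0 β then (1 : ℝ)
    else if p1 α < p1 β ∧ p0 β < p0 α then -1
    else 0

/-- The combinatorial data `π = (p0, p1)` is irreducible. -/
def rvIrreducible {A : Type*} (d : ℕ) (p0 p1 : A ≃ Fin d) : Prop :=
  ∀ j : ℕ, 1 ≤ j → j ≤ d - 1 →
    {α : A | (p0 α : ℕ) < j} ≠ {α : A | (p1 α : ℕ) < j}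

/-- The Rauzy–Veech update of the loser-side permutation; `e = π_ε` (winner side),
`f = π_{1−ε}` (the side being updated). -/
def rvUpdate {A : Type*} (d : ℕ) (hd : 0 < d) (e f : A ≃ Fin d) (α : A) : Fin d :=
  haveI : NeZero d := ⟨hd.ne'⟩
  if f α ≤ f (e.symm (finTop d hd)) then f α
  else if f α < finTop d hd then f α + 1
  else f (e.symm (finTop d hd)) + 1

/-- The Rauzy–Veech matrix `Θ_{π,ε} = I + E_{α(1−ε), α(ε)}`, where `e = π_ε` and
`f = π_{1−ε}`, so that `α(ε) = e⁻¹(d)` is the winner and `α(1−ε) = f⁻¹(d)` is the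
loser. -/
def rvTheta {A : Type*} [Fintype A] [DecidableEq A] (d : ℕ) (hd : 0 < d)
    (e f : A ≃ Fin d) : Matrix A A ℝ :=
  1 + Matrix.single (f.symm (finTop d hd)) (e.symm (finTop d hd)) 1

/-!
Write `w` for the winner and `l` for the loser; irreducibility gives `w ≠ l`, so `Θ` is the
transvection adding row `w` to row `l`, and `Θ Ω Θᵀ` differs from `Ω` only in row and column `l`,
where `(Θ Ω Θᵀ)_{lβ} = Ω_{lβ} + Ω_{wβ}`. The move `r_ε` only reinserts `l` directly after `w` in
the order `π_{1−ε}`, so `Ω_{π'}` agrees with `Ω_π` off row and column `l`; on row `l`, comparing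
positions gives `Ω_{π'}(l, β) = Ω_π(l, β) + Ω_π(w, β)`, and column `l` follows by antisymmetry.
For `ε = 1` both sides change sign, since `Ω` is antisymmetric in the pair `(π₀, π₁)`.
-/

theorem Matrix.transpose_transvection {n R : Type*} [DecidableEq n] [CommRing R] (i j : n) (c : R) :
    (transvection i j c)ᵀ = transvection j i c := by
  simp [transvection]

section FinTop

variable {A : Type*} {d : ℕ}

lemma le_finTop (hd : 0 < d) (i : Fin d) : i ≤ finTop d hd :=
  Fin.le_def.mpr (by simp [finTop]; omega)

lemma Fin.val_add_one_of_lt_finTop (hd : 0 < d) {i : Fin d} (h : i < finTop d hd) :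
    haveI : NeZero d := ⟨hd.ne'⟩
    ((i + 1 : Fin d) : ℕ) = i + 1 :=
  Fin.val_add_one_of_lt' (by rw [Fin.lt_def] at h; simp only [finTop] at h; omega)

lemma Equiv.lt_finTop_iff (hd : 0 < d) (g : A ≃ Fin d) (x : A) :
    g x < finTop d hd ↔ x ≠ g.symm (finTop d hd) :=
  (le_finTop hd (g x)).lt_iff_ne.trans (g.eq_symm_apply).symm.not

lemma Equiv.apply_lt_finTop_of_ne (hd : 0 < d) {g : A ≃ Fin d} {t x : A}
    (ht : g t = finTop d hd) (hx : x ≠ t) : g x < finTop d hd :=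
  (le_finTop hd _).lt_of_ne (ht ▸ g.injective.ne hx)

lemma symm_finTop_ne_of_rvIrreducible (hd : 1 < d) {p0 p1 : A ≃ Fin d}
    (h : rvIrreducible d p0 p1) :
    p0.symm (finTop d (Nat.zero_lt_of_lt hd)) ≠ p1.symm (finTop d (Nat.zero_lt_of_lt hd)) := by
  intro heq
  refine h (d - 1) (by omega) le_rfl (Set.ext fun x => ?_)
  change p0 x < finTop d (Nat.zero_lt_of_lt hd) ↔ p1 x < finTop d (Nat.zero_lt_of_lt hd)
  rw [p0.lt_finTop_iff, p1.lt_finTop_iff, heq]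

end FinTop

section Omega

variable {A : Type*} [Fintype A] {d : ℕ} (p0 p1 : A ≃ Fin d)

@[simp]
lemma rvOmega_apply_self (α : A) : rvOmega d p0 p1 α α = 0 := by
  simp [rvOmega]

lemma rvOmega_apply_comm (α β : A) : rvOmega d p0 p1 β α = -rvOmega d p0 p1 α β := by
  simp only [rvOmega, of_apply]
  split_ifs <;> grind

lemma rvOmega_swap : rvOmega d p1 p0 = -rvOmega d p0 p1 := by
  ext α β
  rw [neg_apply, ← rvOmega_apply_comm]
  simp only [rvOmega, of_apply, and_comm]

end Omega

section Update

variable {A : Type*} {d : ℕ} (hd : 0 < d)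
  {e f : A ≃ Fin d} {w l : A} (hw : e w = finTop d hd) (hl : f l = finTop d hd)
include hw hl

lemma rvUpdate_val_of_ne {x : A} (hx : x ≠ l) :
    (rvUpdate d hd e f x : ℕ) = if f x ≤ f w then (f x : ℕ) else f x + 1 := by
  have hsymm : e.symm (finTop d hd) = w := e.symm_apply_eq.mpr hw.symm
  have hx' : f x < finTop d hd := f.apply_lt_finTop_of_ne hd hl hx
  simp only [rvUpdate, hsymm, hx', if_true]
  split_ifs
  · rfl
  · exact Fin.val_add_one_of_lt_finTop hd hx'

lemma rvUpdate_val_loser (hlw : l ≠ w) : (rvUpdate d hd e f l : ℕ) = f w + 1 := by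
  have hsymm : e.symm (finTop d hd) = w := e.symm_apply_eq.mpr hw.symm
  have hw' : f w < finTop d hd := f.apply_lt_finTop_of_ne hd hl hlw.symm
  simp only [rvUpdate, hsymm, hl, not_le.mpr hw', lt_irrefl, if_false]
  exact Fin.val_add_one_of_lt_finTop hd hw'

lemma rvUpdate_lt_rvUpdate_iff {x y : A} (hx : x ≠ l) (hy : y ≠ l) :
    rvUpdate d hd e f x < rvUpdate d hd e f y ↔ f x < f y := by
  rw [Fin.lt_def, Fin.lt_def, rvUpdate_val_of_ne hd hw hl hx, rvUpdate_val_of_ne hd hw hl hy]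
  simp only [Fin.le_def]
  split_ifs <;> omega

lemma rvUpdate_lt_rvUpdate_loser_iff (hlw : l ≠ w) {y : A} (hy : y ≠ l) :
    rvUpdate d hd e f y < rvUpdate d hd e f l ↔ f y ≤ f w := by
  rw [Fin.lt_def, rvUpdate_val_of_ne hd hw hl hy, rvUpdate_val_loser hd hw hl hlw]
  simp only [Fin.le_def]
  split_ifs <;> omega

lemma rvUpdate_loser_lt_rvUpdate_iff (hlw : l ≠ w) {y : A} (hy : y ≠ l) :
    rvUpdate d hd e f l < rvUpdate d hd e f y ↔ f w < f y := by
  rw [Fin.lt_def, rvUpdate_val_of_ne hd hw hl hy, rvUpdate_val_loser hd hw hl hlw, Fin.lt_def]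
  simp only [Fin.le_def]
  split_ifs <;> omega

variable [Fintype A] {f' : A ≃ Fin d} (hf' : ∀ x, f' x = rvUpdate d hd e f x)
include hf'

lemma rvOmega_rvUpdate_apply_of_ne {a b : A} (ha : a ≠ l) (hb : b ≠ l) :
    rvOmega d e f' a b = rvOmega d e f a b := by
  simp only [rvOmega, of_apply, hf', rvUpdate_lt_rvUpdate_iff hd hw hl ha hb,
    rvUpdate_lt_rvUpdate_iff hd hw hl hb ha]

lemma rvOmega_rvUpdate_apply_loser (hlw : l ≠ w) {b : A} (hb : b ≠ l) :
    rvOmega d e f' l b = rvOmega d e f l b + rvOmega d e f w b := by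
  have hfb : f b < f l := hl ▸ f.apply_lt_finTop_of_ne hd hl hb
  have hel : e l < e w := hw ▸ e.apply_lt_finTop_of_ne hd hw hlw
  simp only [rvOmega, of_apply, hf', rvUpdate_lt_rvUpdate_loser_iff hd hw hl hlw hb,
    rvUpdate_loser_lt_rvUpdate_iff hd hw hl hlw hb]
  have hel' : e b ≠ e l := e.injective.ne hb
  obtain rfl | hbw := eq_or_ne b w
  · split_ifs <;> grind
  · have heb : e b < e w := hw ▸ e.apply_lt_finTop_of_ne hd hw hbw
    split_ifs <;> grind

lemma transvection_mul_rvOmega_mul_transvection [DecidableEq A] (hlw : l ≠ w) :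
    transvection l w (1 : ℝ) * rvOmega d e f * transvection w l 1 = rvOmega d e f' := by
  ext a b
  obtain rfl | hb := eq_or_ne b l
  · rw [mul_transvection_apply_same, one_mul]
    obtain rfl | ha := eq_or_ne a b
    · rw [transvection_mul_apply_same, transvection_mul_apply_same, rvOmega_apply_comm e f a w]
      simp
    · rw [transvection_mul_apply_of_ne (ha := ha), transvection_mul_apply_of_ne (ha := ha),
        rvOmega_apply_comm e f', rvOmega_rvUpdate_apply_loser hd hw hl hf' hlw ha,
        rvOmega_apply_comm e f b a, rvOmega_apply_comm e f w a]
      ring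
  · rw [mul_transvection_apply_of_ne (hb := hb)]
    obtain rfl | ha := eq_or_ne a l
    · rw [transvection_mul_apply_same, one_mul, rvOmega_rvUpdate_apply_loser hd hw hl hf' hlw hb]
    · rw [transvection_mul_apply_of_ne (ha := ha), rvOmega_rvUpdate_apply_of_ne hd hw hl hf' ha hb]

end Update

section Theta

variable {A : Type*} [Fintype A] [DecidableEq A] {d : ℕ} (hd : 0 < d) (e f : A ≃ Fin d)

lemma rvTheta_eq_transvection :
    rvTheta d hd e f = transvection (f.symm (finTop d hd)) (e.symm (finTop d hd)) 1 :=
  rfl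

lemma det_rvTheta (hlw : f.symm (finTop d hd) ≠ e.symm (finTop d hd)) :
    (rvTheta d hd e f).det = 1 :=
  det_transvection_of_ne _ _ hlw 1

lemma rvTheta_mul_rvOmega_mul_transpose (hlw : f.symm (finTop d hd) ≠ e.symm (finTop d hd))
    {f' : A ≃ Fin d} (hf' : ∀ x, f' x = rvUpdate d hd e f x) :
    rvTheta d hd e f * rvOmega d e f * (rvTheta d hd e f)ᵀ = rvOmega d e f' := by
  rw [rvTheta_eq_transvection, transpose_transvection]
  exact transvection_mul_rvOmega_mul_transvection hd (e.apply_symm_apply _) (f.apply_symm_apply _)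
    hf' hlw

end Theta

/-- `π ε` is `π_ε`, with `false ↔ 0` and `true ↔ 1`. -/
theorem stmt16 {A : Type*} [Fintype A] [DecidableEq A] (d : ℕ) (hd : 2 ≤ d)
    (π π' : Bool → A ≃ Fin d) (ε : Bool)
    (hirr : rvIrreducible d (π false) (π true))
    (hkeep : π' ε = π ε)
    (hupd : ∀ α, (π' (!ε)) α = rvUpdate d (by omega) (π ε) (π (!ε)) α) :
    rvTheta d (by omega) (π ε) (π (!ε)) * rvOmega d (π false) (π true) =
        rvOmega d (π' false) (π' true) *
          ((rvTheta d (by omega) (π ε) (π (!ε)))ᵀ)⁻¹ ∧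
      rvTheta d (by omega) (π ε) (π (!ε)) * rvOmega d (π false) (π true) *
          (rvTheta d (by omega) (π ε) (π (!ε)))ᵀ =
        rvOmega d (π' false) (π' true) := by
  have hlw : (π !ε).symm (finTop d (by omega)) ≠ (π ε).symm (finTop d (by omega)) := by
    have := symm_finTop_ne_of_rvIrreducible hd hirr
    cases ε
    exacts [this.symm, this]
  have hconj := rvTheta_mul_rvOmega_mul_transpose (by omega) _ _ hlw hupd
  have hcore : rvTheta d (by omega) (π ε) (π (!ε)) * rvOmega d (π false) (π true) *
      (rvTheta d (by omega) (π ε) (π (!ε)))ᵀ = rvOmega d (π' false) (π' true) := by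
    cases ε
    · rwa [hkeep]
    · rw [rvOmega_swap (π true), rvOmega_swap (π' true), mul_neg, neg_mul, hkeep]
      exact congrArg Neg.neg hconj
  refine ⟨?_, hcore⟩
  rw [← hcore, mul_nonsing_inv_cancel_right _ _ (by simp [det_rvTheta _ _ _ hlw])]
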